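/- Suppose the force 1-form f_d is closed, i.e. df_d = 0, equivalently (fderiv ℝ f_d x U)(V) = (fderiv ℝ f_d x V)(U) for all x, U, V. Then ω⁺ = ω⁻ =: ω_f, and every local flow F : U → E × E of the system (a differentiable map with FL⁻(F(x)) = FL⁺(x) for all x ∈ U) preserves ω_f: for every x ∈ U and all U₁, V₁ ∈ E × E, ω_f(F(x))( (fderiv ℝ F x)(U₁), (fderiv ℝ F x)(V₁) ) = ω_f(x)(U₁,V₁). -/

import Mathlib

open ContinuousLinearMap

variable {E : Type*} [NormedAddCommGroup E] [NormedSpace ℝ E] [FiniteDimensional ℝ E]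

/-- Partial Fréchet derivative in the first variable. -/
noncomputable def D1 (L : E × E → ℝ) (x : E × E) : E →L[ℝ] ℝ :=
  fderiv ℝ (fun a => L (a, x.2)) x.1

/-- Partial Fréchet derivative in the second variable. -/
noncomputable def D2 (L : E × E → ℝ) (x : E × E) : E →L[ℝ] ℝ :=
  fderiv ℝ (fun b => L (x.1, b)) x.2

/-- The force 1-form `f_d` on `E × E`. -/
noncomputable def fd (fm fp : E × E → (E →L[ℝ] ℝ)) (x : E × E) : (E × E) →L[ℝ] ℝ :=
  (fm x).comp (ContinuousLinearMap.fst ℝ E E) + (fp x).comp (ContinuousLinearMap.snd ℝ E E)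

/-- The 1-form `θ⁺` on `E × E`. -/
noncomputable def thetaP (Ld : E × E → ℝ) (fp : E × E → (E →L[ℝ] ℝ)) (x : E × E) :
    (E × E) →L[ℝ] ℝ := (D2 Ld x + fp x).comp (ContinuousLinearMap.snd ℝ E E)

/-- The 1-form `θ⁻` on `E × E`. -/
noncomputable def thetaM (Ld : E × E → ℝ) (fm : E × E → (E →L[ℝ] ℝ)) (x : E × E) :
    (E × E) →L[ℝ] ℝ := -((D1 Ld x + fm x).comp (ContinuousLinearMap.fst ℝ E E))

/-- The exterior derivative of a 1-form `α` on `E × E`, as a function of two vectors. -/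
noncomputable def extd (α : E × E → ((E × E) →L[ℝ] ℝ)) (x : E × E) (U V : E × E) : ℝ :=
  fderiv ℝ α x U V - fderiv ℝ α x V U

/-- The 2-form `ω⁺ := -dθ⁺` on `E × E`. -/
noncomputable def omegaP (Ld : E × E → ℝ) (fp : E × E → (E →L[ℝ] ℝ)) (x : E × E)
    (U V : E × E) : ℝ := -extd (thetaP Ld fp) x U V

/-- The 2-form `ω⁻ := -dθ⁻` on `E × E`. -/
noncomputable def omegaM (Ld : E × E → ℝ) (fm : E × E → (E →L[ℝ] ℝ)) (x : E × E)
    (U V : E × E) : ℝ := -extd (thetaM Ld fm) x U V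

/-- The forced discrete Legendre transform `FL⁺`. -/
noncomputable def FLp (Ld : E × E → ℝ) (fp : E × E → (E →L[ℝ] ℝ)) (x : E × E) :
    E × (E →L[ℝ] ℝ) := (x.2, D2 Ld x + fp x)

/-- The forced discrete Legendre transform `FL⁻`. -/
noncomputable def FLm (Ld : E × E → ℝ) (fm : E × E → (E →L[ℝ] ℝ)) (x : E × E) :
    E × (E →L[ℝ] ℝ) := (x.1, -D1 Ld x - fm x)


section AuxLemmas

variable (Ld : E × E → ℝ)

lemma D1_eq' (hLd : Differentiable ℝ Ld) (x : E × E) :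
    D1 Ld x = (fderiv ℝ Ld x).comp (inl ℝ E E) := by
  have h : HasFDerivAt (fun a => Ld (a, x.2))
      ((fderiv ℝ Ld x).comp (inl ℝ E E)) x.1 := by
    exact
      ((hLd x).hasFDerivAt).comp x.1 (hasFDerivAt_prodMk_left x.1 x.2)
  exact h.fderiv

lemma D2_eq' (hLd : Differentiable ℝ Ld) (x : E × E) :
    D2 Ld x = (fderiv ℝ Ld x).comp (inr ℝ E E) := by
  have h : HasFDerivAt (fun b => Ld (x.1, b))
      ((fderiv ℝ Ld x).comp (inr ℝ E E)) x.2 := by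
    exact
      ((hLd x).hasFDerivAt).comp x.2 (hasFDerivAt_prodMk_right x.1 x.2)
  exact h.fderiv

lemma fderiv_split' (hLd : Differentiable ℝ Ld) (x U : E × E) :
    fderiv ℝ Ld x U = D1 Ld x U.1 + D2 Ld x U.2 := by
  rw [D1_eq' Ld hLd, D2_eq' Ld hLd]
  simp only [comp_apply, inl_apply, inr_apply]
  rw [← map_add]
  simp

end AuxLemmas

set_option maxHeartbeats 1600000 in
/-- **Closed force: `ω⁺ = ω⁻` and the flow preserves this symplectic structure.**
If the force 1-form `f_d` is closed (`d f_d = 0`), then `ω⁺ = ω⁻ =: ω_f`, and any local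
flow of the system preserves `ω_f`. -/
theorem flow_preserves_omega_of_closed_force
    (Ld : E × E → ℝ) (fm fp : E × E → (E →L[ℝ] ℝ))
    (hLd : ContDiff ℝ (⊤ : ℕ∞) Ld) (hfm : ContDiff ℝ (⊤ : ℕ∞) fm) (hfp : ContDiff ℝ (⊤ : ℕ∞) fp)
    (hclosed : ∀ (x : E × E) (U V : E × E),
      fderiv ℝ (fd fm fp) x U V = fderiv ℝ (fd fm fp) x V U) :
    (∀ (x : E × E) (U V : E × E), omegaP Ld fp x U V = omegaM Ld fm x U V)
    ∧ (∀ (S : Set (E × E)) (F : (E × E) → (E × E)), IsOpen S →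
        DifferentiableOn ℝ F S → (∀ x ∈ S, FLm Ld fm (F x) = FLp Ld fp x) →
        ∀ x ∈ S, ∀ U₁ V₁ : E × E,
          omegaP Ld fp (F x) (fderiv ℝ F x U₁) (fderiv ℝ F x V₁)
            = omegaP Ld fp x U₁ V₁) := by
  -- basic differentiability facts
  have hLdd : Differentiable ℝ Ld := hLd.differentiable (by simp)
  have hdLd : ContDiff ℝ (⊤ : ℕ∞) (fderiv ℝ Ld) := hLd.fderiv_right (by simp)
  have hD1 : ContDiff ℝ (⊤ : ℕ∞) (fun x => D1 Ld x) := by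
    have h : (fun x : E × E => D1 Ld x)
        = fun x => (fderiv ℝ Ld x).comp (inl ℝ E E) := funext (D1_eq' Ld hLdd)
    rw [h]; exact hdLd.clm_comp contDiff_const
  have hD2 : ContDiff ℝ (⊤ : ℕ∞) (fun x => D2 Ld x) := by
    have h : (fun x : E × E => D2 Ld x)
        = fun x => (fderiv ℝ Ld x).comp (inr ℝ E E) := funext (D2_eq' Ld hLdd)
    rw [h]; exact hdLd.clm_comp contDiff_const
  have hthetaM : ContDiff ℝ (⊤ : ℕ∞) (thetaM Ld fm) := by
    unfold thetaM; exact ((hD1.add hfm).clm_comp contDiff_const).neg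
  have hthetaP : ContDiff ℝ (⊤ : ℕ∞) (thetaP Ld fp) := by
    unfold thetaP; exact (hD2.add hfp).clm_comp contDiff_const
  have hfd : ContDiff ℝ (⊤ : ℕ∞) (fd fm fp) := by
    unfold fd; exact (hfm.clm_comp contDiff_const).add (hfp.clm_comp contDiff_const)
  -- Part 1 : extd θ⁺ = extd θ⁻
  have hext : ∀ x U V, extd (thetaP Ld fp) x U V = extd (thetaM Ld fm) x U V := by
    intro x U V
    have hsum : thetaP Ld fp
        = fun y => thetaM Ld fm y + (fderiv ℝ Ld y + fd fm fp y) := by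
      funext y
      refine ContinuousLinearMap.ext fun W => ?_
      simp only [thetaP, thetaM, fd, add_apply, comp_apply, coe_fst', coe_snd',
        neg_apply]
      rw [fderiv_split' Ld hLdd]
      ring
    have e1 : fderiv ℝ (thetaP Ld fp) x
        = fderiv ℝ (thetaM Ld fm) x + fderiv ℝ (fun y => fderiv ℝ Ld y + fd fm fp y) x := by
      rw [hsum]
      exact fderiv_add (hthetaM.differentiable (by simp) x)
        ((hdLd.differentiable (by simp) x).add (hfd.differentiable (by simp) x))
    have e2 : fderiv ℝ (fun y => fderiv ℝ Ld y + fd fm fp y) x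
        = fderiv ℝ (fderiv ℝ Ld) x + fderiv ℝ (fd fm fp) x :=
      fderiv_add (hdLd.differentiable (by simp) x) (hfd.differentiable (by simp) x)
    have hsymm : fderiv ℝ (fderiv ℝ Ld) x U V = fderiv ℝ (fderiv ℝ Ld) x V U :=
      second_derivative_symmetric (fun y => (hLdd y).hasFDerivAt)
        ((hdLd.differentiable (by simp) x).hasFDerivAt) U V
    have hc := hclosed x U V
    simp only [extd, e1, e2, add_apply]
    linarith
  refine ⟨fun x U V => by simp only [omegaP, omegaM, hext], ?_⟩
  -- Part 2
  intro S F hS hF hflow x hx U₁ V₁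
  have hFx : DifferentiableAt ℝ F x := hF.differentiableAt (hS.mem_nhds hx)
  set A := fderiv ℝ F x with hA
  have hc1 : ∀ y ∈ S, (F y).1 = y.2 := fun y hy => congrArg Prod.fst (hflow y hy)
  have hc2 : ∀ y ∈ S, -D1 Ld (F y) - fm (F y) = D2 Ld y + fp y :=
    fun y hy => congrArg Prod.snd (hflow y hy)
  set J : (E × E) →L[ℝ] (E × E) := (inl ℝ E E).comp (snd ℝ E E) with hJ
  set C : ((E × E) →L[ℝ] ℝ) →L[ℝ] ((E × E) →L[ℝ] ℝ) :=
    (compL ℝ (E × E) (E × E) ℝ).flip J with hC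
  have hCapp : ∀ g : (E × E) →L[ℝ] ℝ, C g = g.comp J := fun g => rfl
  -- the pullback identity θ⁺ = F*θ⁻ on S
  have key : Set.EqOn (thetaP Ld fp) (fun y => C (thetaM Ld fm (F y))) S := by
    intro y hy
    refine ContinuousLinearMap.ext fun W => ?_
    have h2 := DFunLike.congr_fun (hc2 y hy) W.2
    simp only [sub_apply, neg_apply, add_apply] at h2
    show (thetaP Ld fp y) W = C (thetaM Ld fm (F y)) W
    rw [hCapp]
    simp [thetaP, thetaM, hJ]
    linarith
  have hdP : fderiv ℝ (thetaP Ld fp) x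
      = C.comp ((fderiv ℝ (thetaM Ld fm) (F x)).comp A) := by
    have h1 : fderiv ℝ (thetaP Ld fp) x
        = fderiv ℝ (fun y => C (thetaM Ld fm (F y))) x :=
      (key.eventuallyEq_of_mem (hS.mem_nhds hx)).fderiv_eq
    have hh : HasFDerivAt (fun y => thetaM Ld fm (F y))
        ((fderiv ℝ (thetaM Ld fm) (F x)).comp A) x :=
      ((hthetaM.differentiable (by simp) (F x)).hasFDerivAt).comp x hFx.hasFDerivAt
    have h2 : HasFDerivAt (fun y => C (thetaM Ld fm (F y)))
        (C.comp ((fderiv ℝ (thetaM Ld fm) (F x)).comp A)) x :=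
      C.hasFDerivAt.comp x hh
    rw [h1, h2.fderiv]
  -- the derivative of θ⁻ only sees the first component of its last argument
  set Cf : (E →L[ℝ] ℝ) →L[ℝ] ((E × E) →L[ℝ] ℝ) :=
    (compL ℝ (E × E) E ℝ).flip (fst ℝ E E) with hCf
  have hm : ContDiff ℝ (⊤ : ℕ∞) (fun y : E × E => -(D1 Ld y + fm y)) := (hD1.add hfm).neg
  have hthetaM_eq : thetaM Ld fm = fun y => Cf (-(D1 Ld y + fm y)) := by
    funext y
    refine ContinuousLinearMap.ext fun W => ?_
    simp only [thetaM, hCf, flip_apply, compL_apply, comp_apply, neg_apply, coe_fst']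
  have honlyfst : ∀ (y W W' W'' : E × E), W'.1 = W''.1 →
      fderiv ℝ (thetaM Ld fm) y W W' = fderiv ℝ (thetaM Ld fm) y W W'' := by
    intro y W W' W'' hWW
    have hd : fderiv ℝ (thetaM Ld fm) y
        = Cf.comp (fderiv ℝ (fun z : E × E => -(D1 Ld z + fm z)) y) := by
      rw [hthetaM_eq]
      exact (Cf.hasFDerivAt.comp y (hm.differentiable (by simp) y).hasFDerivAt).fderiv
    rw [hd]
    simp only [comp_apply, hCf, flip_apply, compL_apply, coe_fst', hWW]
  have hAfst : ∀ V : E × E, (A V).1 = V.2 := by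
    have e1 : Set.EqOn (fun y => (F y).1) (fun y : E × E => y.2) S :=
      fun y hy => hc1 y hy
    have e2 : fderiv ℝ (fun y => (F y).1) x = fderiv ℝ (fun y : E × E => y.2) x :=
      (e1.eventuallyEq_of_mem (hS.mem_nhds hx)).fderiv_eq
    have e3 : fderiv ℝ (fun y => (F y).1) x = (fst ℝ E E).comp A :=
      (hasFDerivAt_fst.comp x hFx.hasFDerivAt).fderiv
    have e4 : fderiv ℝ (fun y : E × E => y.2) x = snd ℝ E E := hasFDerivAt_snd.fderiv
    intro V
    have h5 := congrArg (fun g : (E × E) →L[ℝ] E => g V) (e3.symm.trans (e2.trans e4))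
    simpa using h5
  have hJA : ∀ W V : E × E,
      fderiv ℝ (thetaM Ld fm) (F x) W (J V) = fderiv ℝ (thetaM Ld fm) (F x) W (A V) := by
    intro W V
    exact honlyfst (F x) W (J V) (A V) (by simp [hJ, hAfst V])
  have main : extd (thetaP Ld fp) x U₁ V₁
      = extd (thetaM Ld fm) (F x) (A U₁) (A V₁) := by
    simp only [extd, hdP, comp_apply, hCapp]
    rw [hJA, hJA]
  calc omegaP Ld fp (F x) (A U₁) (A V₁)
      = - extd (thetaM Ld fm) (F x) (A U₁) (A V₁) := by
        simp only [omegaP, hext]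
    _ = - extd (thetaP Ld fp) x U₁ V₁ := by rw [main]
    _ = omegaP Ld fp x U₁ V₁ := rfl
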